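/- Let μ ∈ {−1,1}, let I ⊆ ℝ be an open interval containing 0, let s : I → ℝ³ be a C¹ map with s(t) ·_μ s(t) = μ for all t ∈ I, let A : I → ℝ be continuous, and let v : I → ℝ³ be a differentiable map satisfying v'(t) = −μ (s'(t) ·_μ v(t)) s(t) + A(t) (s(t) ×_μ v(t)) for all t ∈ I, with v(0) ·_μ s(0) = 0 and v(0) ·_μ v(0) = 1. Then v(t) ·_μ s(t) = 0 and v(t) ·_μ v(t) = 1 for all t ∈ I. -/

import Mathlib

noncomputable section

/-- The inner product `v ·_μ w = μ v₀ w₀ + v₁ w₁ + v₂ w₂` on `ℝ³`. -/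
def mdot (μ : ℝ) (v w : Fin 3 → ℝ) : ℝ :=
  μ * v 0 * w 0 + v 1 * w 1 + v 2 * w 2

/-- The standard cross product on `ℝ³`. -/
def cross3 (v w : Fin 3 → ℝ) : Fin 3 → ℝ :=
  ![v 1 * w 2 - v 2 * w 1, v 2 * w 0 - v 0 * w 2, v 0 * w 1 - v 1 * w 0]

/-- The cross product `v ×_μ w = η_μ · (v × w)`, where `η_μ = diag(μ,1,1)`. -/
def mcross (μ : ℝ) (v w : Fin 3 → ℝ) : Fin 3 → ℝ :=
  ![μ * cross3 v w 0, cross3 v w 1, cross3 v w 2]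

/-! Both `v ·_μ s` and `v ·_μ v` have zero derivative on `I`, hence keep their values at `0`.
In the derivative of `v ·_μ s`, the `s`-component of `v'` contributes `-μ² (s' ·_μ v)`, which
cancels `v ·_μ s'` because `μ² = 1`; in that of `v ·_μ v` it contributes a multiple of
`s ·_μ v = 0`. The `×_μ`-term never contributes: `η_μ² = 1` makes `a ×_μ b` `·_μ`-orthogonal
to `a` and `b`. -/

theorem Convex.eq_of_forall_hasDerivAt_zero {E : Type*} [NormedAddCommGroup E] [NormedSpace ℝ E]
    {I : Set ℝ} (hI : Convex ℝ I) {f : ℝ → E} (hf : ∀ t ∈ I, HasDerivAt f 0 t)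
    {a b : ℝ} (ha : a ∈ I) (hb : b ∈ I) : f a = f b := by
  have h := hI.norm_image_sub_le_of_norm_hasDerivWithin_le
    (fun t ht => (hf t ht).hasDerivWithinAt) (fun _ _ => norm_zero.le) hb ha
  rwa [zero_mul, norm_le_zero_iff, sub_eq_zero] at h

section mdot

variable (μ : ℝ)

theorem mdot_comm (v w : Fin 3 → ℝ) : mdot μ v w = mdot μ w v := by
  simp only [mdot]; ring

theorem mdot_add_left (u v w : Fin 3 → ℝ) : mdot μ (u + v) w = mdot μ u w + mdot μ v w := by
  simp only [mdot, Pi.add_apply]; ring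

theorem mdot_smul_left (c : ℝ) (v w : Fin 3 → ℝ) : mdot μ (c • v) w = c * mdot μ v w := by
  simp only [mdot, Pi.smul_apply, smul_eq_mul]; ring

variable {μ}

theorem mdot_mcross_self_left (hμ : μ * μ = 1) (a b : Fin 3 → ℝ) :
    mdot μ (mcross μ a b) a = 0 := by
  simp only [mdot, mcross, cross3, Matrix.cons_val_zero, Matrix.cons_val_one,
    Matrix.cons_val_two, Matrix.head_cons, Matrix.tail_cons]
  linear_combination (a 0 * (a 1 * b 2 - a 2 * b 1)) * hμ

theorem mdot_mcross_self_right (hμ : μ * μ = 1) (a b : Fin 3 → ℝ) :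
    mdot μ (mcross μ a b) b = 0 := by
  simp only [mdot, mcross, cross3, Matrix.cons_val_zero, Matrix.cons_val_one,
    Matrix.cons_val_two, Matrix.head_cons, Matrix.tail_cons]
  linear_combination (b 0 * (a 1 * b 2 - a 2 * b 1)) * hμ

theorem HasDerivAt.mdot {f g : ℝ → Fin 3 → ℝ} {f' g' : Fin 3 → ℝ} {t : ℝ}
    (hf : HasDerivAt f f' t) (hg : HasDerivAt g g' t) :
    HasDerivAt (fun u => mdot μ (f u) (g u)) (mdot μ f' (g t) + mdot μ (f t) g') t := by
  have hfi : ∀ i, HasDerivAt (fun u => f u i) (f' i) t := hasDerivAt_pi.mp hf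
  have hgi : ∀ i, HasDerivAt (fun u => g u i) (g' i) t := hasDerivAt_pi.mp hg
  have h := ((((hfi 0).const_mul μ).mul (hgi 0)).add ((hfi 1).mul (hgi 1))).add
    ((hfi 2).mul (hgi 2))
  exact h.congr_deriv (by simp only [_root_.mdot]; ring)

end mdot

theorem stmt14_general (μ : ℝ) (hμ : μ = 1 ∨ μ = -1)
    (I : Set ℝ) (hIconv : Convex ℝ I) (h0I : (0 : ℝ) ∈ I)
    (s s' : ℝ → (Fin 3 → ℝ))
    -- `s` is C¹ on `I` with derivative `s'`
    (hs : ∀ t ∈ I, HasDerivAt s (s' t) t)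
    (hsμ : ∀ t ∈ I, mdot μ (s t) (s t) = μ)
    (A : ℝ → ℝ)
    (v : ℝ → (Fin 3 → ℝ))
    (hv : ∀ t ∈ I, HasDerivAt v
      ((-(μ * mdot μ (s' t) (v t))) • s t + A t • mcross μ (s t) (v t)) t)
    (hvs0 : mdot μ (v 0) (s 0) = 0) (hvv0 : mdot μ (v 0) (v 0) = 1) :
    ∀ t ∈ I, mdot μ (v t) (s t) = 0 ∧ mdot μ (v t) (v t) = 1 := by
  have hμμ : μ * μ = 1 := by rcases hμ with rfl | rfl <;> norm_num
  have hvs : ∀ t ∈ I, mdot μ (v t) (s t) = 0 := by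
    intro t ht
    rw [← hvs0]
    refine hIconv.eq_of_forall_hasDerivAt_zero (f := fun u => mdot μ (v u) (s u))
      (fun u hu => ?_) ht h0I
    refine ((hv u hu).mdot (hs u hu)).congr_deriv ?_
    rw [mdot_add_left, mdot_smul_left, mdot_smul_left, mdot_mcross_self_left hμμ, hsμ u hu,
      mdot_comm μ (v u)]
    linear_combination (-mdot μ (s' u) (v u)) * hμμ
  refine fun t ht => ⟨hvs t ht, ?_⟩
  rw [← hvv0]
  refine hIconv.eq_of_forall_hasDerivAt_zero (f := fun u => mdot μ (v u) (v u))
    (fun u hu => ?_) ht h0I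
  refine ((hv u hu).mdot (hv u hu)).congr_deriv ?_
  rw [mdot_comm μ (v u), mdot_add_left, mdot_smul_left, mdot_smul_left,
    mdot_mcross_self_right hμμ, mdot_comm μ (s u), hvs u hu]
  ring

theorem stmt14 (μ : ℝ) (hμ : μ = 1 ∨ μ = -1)
    (I : Set ℝ) (hIopen : IsOpen I) (hIconv : Convex ℝ I) (h0I : (0 : ℝ) ∈ I)
    (s s' : ℝ → (Fin 3 → ℝ))
    -- `s` is C¹ on `I` with derivative `s'`
    (hs : ∀ t ∈ I, HasDerivAt s (s' t) t) (hs' : ContinuousOn s' I)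
    (hsμ : ∀ t ∈ I, mdot μ (s t) (s t) = μ)
    (A : ℝ → ℝ) (hA : ContinuousOn A I)
    (v : ℝ → (Fin 3 → ℝ))
    (hv : ∀ t ∈ I, HasDerivAt v
      ((-(μ * mdot μ (s' t) (v t))) • s t + A t • mcross μ (s t) (v t)) t)
    (hvs0 : mdot μ (v 0) (s 0) = 0) (hvv0 : mdot μ (v 0) (v 0) = 1) :
    ∀ t ∈ I, mdot μ (v t) (s t) = 0 ∧ mdot μ (v t) (v t) = 1 :=
  stmt14_general μ hμ I hIconv h0I s s' hs hsμ A v hv hvs0 hvv0
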